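/- For every integer m ≥ 1: ∑_{p=0}^{m−1} (−1)^{p+m−1}·S(p+m−1, p) = (m−1)!. -/

import Mathlib

/-!
Write `T n = ∑_{p ≤ n} (-1)^(p+n) S(p+n, p)`, so that the theorem says `T n = n!`.
Applying the recurrence to every term of `T (n+1)` splits it into
`∑_q (q+n+1) b q - ∑_q (q+1) b (q+1)` with `b q = (-1)^(q+n) S(q+n, q)` the terms of `T n`.
Since the boundary terms `S(n+1, 0)` and `S(2n+1, n+1)` vanish, the second sum is `∑_q q b q`
after an index shift, and the difference is `(n+1) T n`.
-/

/-- 2-associated Stirling subset numbers: `S(0,0)=1`, `S(n,k)=0` if `n<2k` and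
`(n,k)≠(0,0)`, and `S(n,k)=k·S(n−1,k)+(n−1)·S(n−2,k−1)` for `n≥1`. -/
def S2 : ℕ → ℕ → ℕ
  | 0, 0 => 1
  | 0, _ + 1 => 0
  | 1, _ => 0
  | _ + 2, 0 => 0
  | n + 2, k + 1 => (k + 1) * S2 (n + 1) (k + 1) + (n + 1) * S2 n k

open Finset

theorem S2_eq_zero_of_lt : ∀ {n k : ℕ}, n < 2 * k → S2 n k = 0
  | 0, _ + 1, _ => rfl
  | 1, _, _ => rfl
  | n + 2, k + 1, h => by
      rw [S2, S2_eq_zero_of_lt (by omega), S2_eq_zero_of_lt (by omega : n < 2 * k), mul_zero,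
        mul_zero, add_zero]

theorem S2_succ_zero : ∀ n : ℕ, S2 (n + 1) 0 = 0
  | 0 => rfl
  | _ + 1 => rfl

def signedS2 (n p : ℕ) : ℤ := (-1) ^ (p + n) * S2 (p + n) p

theorem signedS2_succ_zero (n : ℕ) : signedS2 (n + 1) 0 = 0 := by
  simp [signedS2, S2_succ_zero]

theorem signedS2_succ_self (n : ℕ) : signedS2 n (n + 1) = 0 := by
  simp [signedS2, S2_eq_zero_of_lt (by omega : n + 1 + n < 2 * (n + 1))]

theorem signedS2_succ_succ (n q : ℕ) :
    signedS2 (n + 1) (q + 1) = (q + n + 1) * signedS2 n q - (q + 1) * signedS2 n (q + 1) := by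
  rw [signedS2, signedS2, signedS2, show q + 1 + (n + 1) = q + n + 2 by omega,
    show q + 1 + n = q + n + 1 by omega, S2]
  push_cast
  ring

theorem sum_signedS2_succ (n : ℕ) :
    ∑ q ∈ range (n + 2), signedS2 (n + 1) q = (n + 1) * ∑ q ∈ range (n + 1), signedS2 n q := by
  have shift : ∑ q ∈ range (n + 1), ((q : ℤ) + 1) * signedS2 n (q + 1)
      = ∑ q ∈ range (n + 1), (q : ℤ) * signedS2 n q := by
    have h := sum_range_succ' (fun q => (q : ℤ) * signedS2 n q) (n + 1)
    rw [sum_range_succ, signedS2_succ_self] at h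
    simpa using h.symm
  rw [sum_range_succ', signedS2_succ_zero, add_zero]
  simp only [signedS2_succ_succ]
  rw [sum_sub_distrib, shift, ← sum_sub_distrib, mul_sum]
  exact sum_congr rfl fun q _ => by ring

theorem sum_signedS2 : ∀ n : ℕ, ∑ q ∈ range (n + 1), signedS2 n q = n.factorial
  | 0 => by simp [signedS2, S2]
  | n + 1 => by
      rw [sum_signedS2_succ, sum_signedS2 n, Nat.factorial_succ]
      push_cast
      ring

/-- for `m ≥ 1`, `∑_{p=0}^{m−1} (−1)^{p+m−1}·S(p+m−1, p) = (m−1)!`. -/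
theorem stmt_16 (m : ℕ) (hm : 1 ≤ m) :
    ∑ p ∈ Finset.range m, (-1 : ℤ) ^ (p + m - 1) * (S2 (p + m - 1) p : ℤ)
      = (Nat.factorial (m - 1) : ℤ) := by
  obtain ⟨n, rfl⟩ : ∃ n, m = n + 1 := ⟨m - 1, by omega⟩
  simp only [Nat.add_sub_cancel, ← Nat.add_assoc]
  exact sum_signedS2 n
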